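/- arXiv:2505.21719 — 3 statements merged into one kernel-verified Lean document; each statement's English description precedes it below -/
import Mathlib

section
/- Let K = ℚ(q) be the field of rational functions in one variable q over ℚ. Define log_χ(T) = Σ_{k≥1} ([k]_q / k)·T^k ∈ K⟦T⟧, where [k]_q = 1 + q + ⋯ + q^{k-1}, and define exp_χ(T) = (E(T) - 1)·(E(T) - q)^{-1} ∈ K⟦T⟧, where E(T) = exp((1-q)·T) is the formal exponential power series exp evaluated by substituting (1-q)·T (note E(T) - q has constant term 1 - q ≠ 0, hence is invertible in K⟦T⟧). Then exp_χ and log_χ are mutually inverse under composition: exp_χ(log_χ(T)) = T and log_χ(exp_χ(T)) = T in K⟦T⟧. (Both series have zero constant term and linear coefficient 1, so the compositions are defined.) -/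
open PowerSeries

noncomputable section

/-- The field `K = ℚ(q)` of rational functions. -/
abbrev K : Type := RatFunc ℚ

/-- The variable `q ∈ ℚ(q)`. -/
noncomputable def q : K := RatFunc.X

/-- Composition `f(g(T))` of formal power series, which agrees with the usual
substitution of `g` into `f` whenever `g` has zero constant term: the
coefficient of `T^n` in `f(g)` only involves `f_k • g^k` for `k ≤ n`. -/
noncomputable def comp (f g : PowerSeries K) : PowerSeries K :=
  PowerSeries.mk fun n =>
    PowerSeries.coeff n
      (∑ k ∈ Finset.range (n + 1), PowerSeries.C (PowerSeries.coeff k f) * g ^ k)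

/-- `log_χ(T) = Σ_{k ≥ 1} ([k]_q / k) T^k`, where `[k]_q = 1 + q + ⋯ + q^{k-1}`. -/
noncomputable def logChi : PowerSeries K :=
  PowerSeries.mk fun k => (∑ i ∈ Finset.range k, q ^ i) / (k : K)

/-- `E(T) = exp((1-q)·T)`, the formal exponential rescaled by `1 - q`. -/
noncomputable def E : PowerSeries K := PowerSeries.rescale (1 - q) (PowerSeries.exp K)

/-- `exp_χ(T) = (E(T) - 1) · (E(T) - q)⁻¹`, where `E(T) - q` has constant term
`1 - q ≠ 0` and hence is invertible in `K⟦T⟧`. -/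
noncomputable def expChi : PowerSeries K := (E - 1) * (E - PowerSeries.C q)⁻¹

/-!
Composition with a series of zero constant term is Mathlib's `PowerSeries.subst`, an algebra
map that satisfies the chain rule. Since `log_χ' = 1 / ((1 - T)(1 - qT))` (the coefficient
`[n+1]_q` is the convolution of `1, 1, …` and `1, q, q², …`) and `exp_χ` solves
`y' = (1 - y)(1 - qy)`, the chain rule gives `(log_χ ∘ exp_χ)' = 1`, hence
`log_χ ∘ exp_χ = T`. Because `exp_χ` has linear coefficient `1`, it has a compositional
right inverse, which must then be `log_χ`; so `exp_χ ∘ log_χ = T` too.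
-/

namespace PowerSeries

theorem coeff_pow_eq_zero_of_lt {R : Type*} [Semiring R] {g : R⟦X⟧} (hg : constantCoeff g = 0)
    {n k : ℕ} (h : n < k) : coeff n (g ^ k) = 0 :=
  coeff_of_lt_order n ((Nat.cast_lt.mpr h).trans_le (le_order_pow_of_constantCoeff_eq_zero k hg))

theorem subst_eq_X_of_subst_eq_X {R : Type*} [CommRing R] {f g : R⟦X⟧}
    (hg : constantCoeff g = 0) (hg₁ : IsUnit (coeff 1 g)) (h : f.subst g = X) :
    g.subst f = X := by
  set g' := g.substInvOfIsUnit hg₁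
  have hg' : HasSubst g' := .substInvOfIsUnit g hg₁
  have hf : f = g' := calc
    f = f.subst (g.subst g') := by rw [subst_substInvOfIsUnit_right g hg hg₁, X_subst]
    _ = subst g' (f.subst g) := (subst_comp_subst_apply (.of_constantCoeff_zero' hg) hg' f).symm
    _ = g' := by rw [h, subst_X hg']
  rw [hf, subst_substInvOfIsUnit_right g hg hg₁]

theorem derivative_rescale {R : Type*} [CommSemiring R] (a : R) (f : R⟦X⟧) :
    d⁄dX R (rescale a f) = C a * rescale a (d⁄dX R f) := by
  ext n
  simp only [coeff_derivative, coeff_rescale, coeff_C_mul, pow_succ]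
  ring

end PowerSeries

theorem comp_eq_subst {f g : K⟦X⟧} (hg : constantCoeff g = 0) : comp f g = f.subst g := by
  ext n
  rw [comp, coeff_mk, coeff_subst' (HasSubst.of_constantCoeff_zero' hg),
    finsum_eq_sum_of_support_subset (s := Finset.range (n + 1))]
  · simp [map_sum, coeff_C_mul, smul_eq_mul]
  · intro k hk
    contrapose! hk
    simp only [Finset.coe_range, Set.mem_Iio, not_lt] at hk
    simp [coeff_pow_eq_zero_of_lt hg (Nat.lt_of_succ_le hk)]

theorem q_ne_one : q ≠ 1 := by
  rw [q, ← RatFunc.algebraMap_X, ← map_one (algebraMap (Polynomial ℚ) K), Ne,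
    (RatFunc.algebraMap_injective ℚ).eq_iff]
  simpa using Polynomial.X_ne_C (1 : ℚ)

theorem constantCoeff_logChi : constantCoeff logChi = 0 := by
  simp [logChi]

theorem derivative_logChi :
    d⁄dX K logChi = rescale q (mk 1) * mk 1 := by
  ext n
  have hn : (n + 1 : K) ≠ 0 := Nat.cast_add_one_ne_zero n
  rw [coeff_derivative, logChi, coeff_mk, coeff_mul, Finset.Nat.sum_antidiagonal_eq_sum_range_succ
    (fun i j => coeff i (rescale q (mk 1)) * coeff j (mk 1))]
  simp [coeff_rescale, hn]

theorem derivative_logChi_mul : d⁄dX K logChi * ((1 - X) * (1 - C q * X)) = 1 := by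
  have geom_q : rescale q (mk 1) * (1 - C q * X) = 1 := by
    simpa [rescale_X] using congrArg (rescale q) (mk_one_mul_one_sub_eq_one (S := K))
  rw [derivative_logChi]
  linear_combination (mk 1 * (1 - X)) * geom_q + mk_one_mul_one_sub_eq_one (S := K)

theorem derivative_E : d⁄dX K E = C (1 - q) * E := by
  rw [E, derivative_rescale, derivative_exp]

theorem constantCoeff_E : constantCoeff E = 1 := by
  simp [E, ← coeff_zero_eq_constantCoeff]

theorem constantCoeff_expChi : constantCoeff expChi = 0 := by
  simp [expChi, constantCoeff_E]

theorem derivative_expChi :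
    d⁄dX K expChi = (1 - expChi) * (1 - C q * expChi) := by
  set u := (E - C q)⁻¹
  have hu : (E - C q) * u = 1 :=
    PowerSeries.mul_inv_cancel _ (by simpa [constantCoeff_E] using sub_ne_zero.mpr q_ne_one.symm)
  rw [expChi, Derivation.leibniz, derivative_inv', map_sub, map_sub, derivative_E,
    derivative_C, Derivation.map_one_eq_zero, smul_eq_mul, smul_eq_mul, map_sub C, map_one]
  -- `1 - expChi = (1 - q) u` and `1 - q expChi = (1 - q) E u`; both sides are `(1 - q)² E u²`.
  linear_combination ((1 - C q) * u - ((E - C q) * u - 1)) * hu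

theorem coeff_one_expChi : coeff 1 expChi = 1 := by
  have := congrArg (coeff 0) derivative_expChi
  rw [coeff_derivative] at this
  simpa [constantCoeff_expChi] using this

theorem logChi_subst_expChi : logChi.subst expChi = X := by
  have hExp := HasSubst.of_constantCoeff_zero' constantCoeff_expChi
  have hinv : (d⁄dX K logChi).subst expChi * d⁄dX K expChi = 1 := by
    have := congrArg (substAlgHom hExp) derivative_logChi_mul
    rw [map_mul, map_mul, map_sub, map_sub, map_one, map_mul, substAlgHom_X, coe_substAlgHom,
      subst_C] at this
    rwa [derivative_expChi]
  apply derivative.ext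
  · rw [derivative_subst hExp, hinv, derivative_X]
  · rw [constantCoeff_X]
    exact constantCoeff_subst_eq_zero constantCoeff_expChi _ constantCoeff_logChi

/-- `exp_χ` and `log_χ` are mutually inverse for composition of formal power
series: `exp_χ(log_χ(T)) = T` and `log_χ(exp_χ(T)) = T`. -/
theorem stmt3 :
    comp expChi logChi = PowerSeries.X ∧ comp logChi expChi = PowerSeries.X := by
  rw [comp_eq_subst constantCoeff_logChi, comp_eq_subst constantCoeff_expChi]
  have hunit : IsUnit (coeff 1 expChi) := coeff_one_expChi ▸ isUnit_one
  exact ⟨subst_eq_X_of_subst_eq_X constantCoeff_expChi hunit logChi_subst_expChi,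
    logChi_subst_expChi⟩

end
end

section
/- Let R = ℤ[q] and work in the formal power series ring R⟦X,Y⟧ in two variables. The element 1 + q·X·Y has constant term 1, hence is a unit; define F_χ(X,Y) = (X + Y + (1+q)·X·Y) · (1 + q·X·Y)^{-1} ∈ R⟦X,Y⟧. Then F_χ is a commutative one-dimensional formal group law over R: (i) F_χ(X, 0) = X and F_χ(0, Y) = Y; (ii) F_χ(X, Y) = F_χ(Y, X); (iii) F_χ(F_χ(X,Y), Z) = F_χ(X, F_χ(Y,Z)) in R⟦X,Y,Z⟧. -/
/-!
Mathlib's `MvPowerSeries.subst` is a ring homomorphism, and `subst2 F a b` agrees with it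
whenever `a` and `b` have zero constant term: `a ^ i * b ^ j` has order at least `i + j`, so
truncating at the total degree of a monomial loses nothing. Applying it to
`F_χ · (1 + qXY) = X + Y + (1 + q)XY` shows that `s = F_χ(a, b)` satisfies the division-free
relation `s · (1 + qab) = a + b + (1 + q)ab`, with `1 + qab` a unit. The three axioms are then
identities in an arbitrary commutative ring; for associativity, both bracketings are fractions
`P / Q` and `P' / Q'` with `P, Q, P', Q'` polynomials in `q, x, y, z` and `P Q' = P' Q`.
-/

noncomputable section

/-- Substitution of two power series `a, b` (with zero constant terms) for the
two variables of a two-variable formal power series `F`: the coefficient of a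
monomial `d` in `F(a,b)` only involves `F_{ij} · a^i · b^j` for
`i + j ≤ |d|` (the total degree of `d`), since `a^i b^j` has order `≥ i + j`. -/
noncomputable def subst2 {R : Type*} [CommRing R] {σ : Type*}
    (F : MvPowerSeries (Fin 2) R) (a b : MvPowerSeries σ R) : MvPowerSeries σ R :=
  fun d =>
    MvPowerSeries.coeff (R := R) d
      (∑ p ∈ Finset.range ((d.sum fun _ n => n) + 1) ×ˢ
          Finset.range ((d.sum fun _ n => n) + 1),
        MvPowerSeries.C (σ := σ) (R := R)
            (MvPowerSeries.coeff (R := R) (Finsupp.single 0 p.1 + Finsupp.single 1 p.2) F) *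
          a ^ p.1 * b ^ p.2)

/-- The formal group law
`F_χ(X,Y) = (X + Y + (1+q)·X·Y) · (1 + q·X·Y)⁻¹ ∈ ℤ[q]⟦X,Y⟧`,
where `1 + q·X·Y` has constant term `1` and is inverted by `invOfUnit`. -/
noncomputable def Fchi : MvPowerSeries (Fin 2) (Polynomial ℤ) :=
  letI q : Polynomial ℤ := Polynomial.X
  letI X : MvPowerSeries (Fin 2) (Polynomial ℤ) := MvPowerSeries.X 0
  letI Y : MvPowerSeries (Fin 2) (Polynomial ℤ) := MvPowerSeries.X 1
  (X + Y + MvPowerSeries.C (σ := Fin 2) (R := Polynomial ℤ) (1 + q) * X * Y) *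
    MvPowerSeries.invOfUnit (1 + MvPowerSeries.C (σ := Fin 2) (R := Polynomial ℤ) q * X * Y) 1

open MvPowerSeries

section Substitution

variable {R : Type*} [CommRing R] {σ : Type*}

lemma coeff_pow_mul_pow_eq_zero {a b : MvPowerSeries σ R} (ha : constantCoeff a = 0)
    (hb : constantCoeff b = 0) {i j : ℕ} {d : σ →₀ ℕ} (h : d.degree < i + j) :
    coeff d (a ^ i * b ^ j) = 0 := by
  refine coeff_of_lt_order (lt_of_lt_of_le ?_ (le_order_mul ..))
  have := add_le_add (le_order_pow_of_constantCoeff_eq_zero i ha)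
    (le_order_pow_of_constantCoeff_eq_zero j hb)
  exact lt_of_lt_of_le (by exact_mod_cast h) this

lemma isUnit_one_add_C_mul_mul (r : R) {a : MvPowerSeries σ R} (b : MvPowerSeries σ R)
    (ha : constantCoeff a = 0) : IsUnit (1 + C r * a * b) := by
  simp [isUnit_iff_constantCoeff, ha]

lemma prod_pow_finTwo (e : Fin 2 →₀ ℕ) (a b : MvPowerSeries σ R) :
    e.prod (fun s n ↦ ![a, b] s ^ n) = a ^ e 0 * b ^ e 1 := by
  rw [Finsupp.prod_fintype _ _ (fun _ ↦ pow_zero _), Fin.prod_univ_two]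
  rfl

lemma hasSubst_finTwo {a b : MvPowerSeries σ R} (ha : constantCoeff a = 0)
    (hb : constantCoeff b = 0) : HasSubst ![a, b] :=
  hasSubst_of_constantCoeff_zero (Fin.forall_fin_two.mpr ⟨ha, hb⟩)

lemma coeff_subst2 (F : MvPowerSeries (Fin 2) R) (a b : MvPowerSeries σ R) (d : σ →₀ ℕ) :
    coeff d (subst2 F a b) =
      ∑ p ∈ Finset.range (d.degree + 1) ×ˢ Finset.range (d.degree + 1),
        coeff (Finsupp.single 0 p.1 + Finsupp.single 1 p.2) F * coeff d (a ^ p.1 * b ^ p.2) := by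
  rw [coeff_apply, subst2]
  simp only [map_sum, mul_assoc, coeff_C_mul]
  rfl

theorem subst2_eq_subst (F : MvPowerSeries (Fin 2) R) {a b : MvPowerSeries σ R}
    (ha : constantCoeff a = 0) (hb : constantCoeff b = 0) :
    subst2 F a b = subst ![a, b] F := by
  ext d
  set box := Finset.range (d.degree + 1) ×ˢ Finset.range (d.degree + 1)
  let pair : ℕ × ℕ → Fin 2 →₀ ℕ := fun p ↦ Finsupp.single 0 p.1 + Finsupp.single 1 p.2
  have pair_apply (p : ℕ × ℕ) : pair p 0 = p.1 ∧ pair p 1 = p.2 := by simp [pair]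
  have pair_eval (e : Fin 2 →₀ ℕ) : pair (e 0, e 1) = e := by
    ext s; fin_cases s <;> simp [pair]
  rw [coeff_subst (hasSubst_finTwo ha hb),
    finsum_eq_sum_of_support_subset (s := box.image pair), Finset.sum_image, coeff_subst2]
  · refine Finset.sum_congr rfl fun p _ ↦ ?_
    rw [prod_pow_finTwo, (pair_apply p).1, (pair_apply p).2, smul_eq_mul]
  · intro p _ p' _ h
    exact Prod.ext ((pair_apply p).1.symm.trans (h ▸ (pair_apply p').1))
      ((pair_apply p).2.symm.trans (h ▸ (pair_apply p').2))
  · intro e he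
    rw [Function.mem_support, prod_pow_finTwo] at he
    have hle : e 0 + e 1 ≤ d.degree := by
      by_contra! hlt
      exact he (by rw [coeff_pow_mul_pow_eq_zero ha hb hlt, smul_zero])
    rw [Finset.coe_image]
    exact ⟨(e 0, e 1), by simp [box]; omega, pair_eval e⟩

end Substitution

section ChiSum

variable {S : Type*} [CommRing S]

/-- `s = (x + y + (1 + q)xy) / (1 + qxy)`, stated without division. -/
def IsChiSum (q x y s : S) : Prop :=
  s * (1 + q * x * y) = x + y + (1 + q) * x * y

namespace IsChiSum

variable {q x y z s t u v l r : S}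

lemma map {T : Type*} [CommRing T] (f : S →+* T) (h : IsChiSum q x y s) :
    IsChiSum (f q) (f x) (f y) (f s) := by
  simpa [IsChiSum] using congrArg f h

lemma eq_of_right_eq_zero (h : IsChiSum q x 0 s) : s = x := by
  simpa [IsChiSum] using h

lemma eq_of_left_eq_zero (h : IsChiSum q 0 y s) : s = y := by
  simpa [IsChiSum] using h

lemma comm (h : IsChiSum q x y s) : IsChiSum q y x s := by
  unfold IsChiSum at *
  linear_combination h

lemma unique (hs : IsChiSum q x y s) (ht : IsChiSum q x y t) (hu : IsUnit (1 + q * x * y)) :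
    s = t :=
  hu.mul_right_cancel (hs.trans (Eq.symm ht))

lemma assoc (hu : IsChiSum q x y u) (hv : IsChiSum q y z v) (hl : IsChiSum q u z l)
    (hr : IsChiSum q x v r) (hxy : IsUnit (1 + q * x * y)) (hyz : IsUnit (1 + q * y * z))
    (huz : IsUnit (1 + q * u * z)) (hxv : IsUnit (1 + q * x * v)) : l = r := by
  unfold IsChiSum at *
  set Q := (1 + q * x * y) + q * z * (x + y + (1 + q) * x * y)
  set Q' := (1 + q * y * z) + q * x * (y + z + (1 + q) * y * z)
  set P := (x + y + (1 + q) * x * y) + z * (1 + q * x * y) +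
    (1 + q) * z * (x + y + (1 + q) * x * y)
  set P' := (y + z + (1 + q) * y * z) + x * (1 + q * y * z) +
    (1 + q) * x * (y + z + (1 + q) * y * z)
  have hlQ : l * Q = P := by
    linear_combination (1 + q * x * y) * hl + (1 + (1 + q) * z - l * q * z) * hu
  have hrQ' : r * Q' = P' := by
    linear_combination (1 + q * y * z) * hr + (1 + (1 + q) * x - r * q * x) * hv
  have hunit : IsUnit (Q * Q') := by
    rw [show Q = (1 + q * u * z) * (1 + q * x * y) by linear_combination -q * z * hu,
      show Q' = (1 + q * x * v) * (1 + q * y * z) by linear_combination -q * x * hv]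
    exact (huz.mul hxy).mul (hxv.mul hyz)
  exact hunit.mul_right_cancel (by linear_combination Q' * hlQ - Q * hrQ')

end IsChiSum

end ChiSum

section Fchi

variable {σ : Type*}

lemma isChiSum_Fchi : IsChiSum (C Polynomial.X) (X 0) (X 1) Fchi := by
  rw [IsChiSum, Fchi, mul_assoc, invOfUnit_mul _ _ (by simp), mul_one, map_add, map_one]

variable {a b : MvPowerSeries σ (Polynomial ℤ)}

lemma isChiSum_subst2_Fchi (ha : constantCoeff a = 0) (hb : constantCoeff b = 0) :
    IsChiSum (C Polynomial.X) a b (subst2 Fchi a b) := by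
  have hab := hasSubst_finTwo ha hb
  simpa [subst2_eq_subst Fchi ha hb, substAlgHom_X hab, MvPowerSeries.algebraMap_apply] using
    isChiSum_Fchi.map (substAlgHom hab).toRingHom

lemma constantCoeff_subst2_Fchi (ha : constantCoeff a = 0) (hb : constantCoeff b = 0) :
    constantCoeff (subst2 Fchi a b) = 0 := by
  have h := (isChiSum_subst2_Fchi ha hb).map constantCoeff
  rw [ha, hb] at h
  exact h.eq_of_right_eq_zero

end Fchi

/-- **Proposition 2.3 of the paper.** `F_χ` is a commutative one-dimensional
formal group law over `ℤ[q]`: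
(i) `F_χ(X, 0) = X` and `F_χ(0, Y) = Y`;
(ii) `F_χ(X, Y) = F_χ(Y, X)`;
(iii) `F_χ(F_χ(X,Y), Z) = F_χ(X, F_χ(Y,Z))` in `ℤ[q]⟦X,Y,Z⟧`. -/
theorem stmt4 :
    (subst2 Fchi (MvPowerSeries.X 0 : MvPowerSeries (Fin 2) (Polynomial ℤ)) 0 =
        MvPowerSeries.X 0 ∧
      subst2 Fchi 0 (MvPowerSeries.X 1 : MvPowerSeries (Fin 2) (Polynomial ℤ)) =
        MvPowerSeries.X 1) ∧
    subst2 Fchi (MvPowerSeries.X 1 : MvPowerSeries (Fin 2) (Polynomial ℤ))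
        (MvPowerSeries.X 0) = Fchi ∧
    subst2 Fchi
        (subst2 Fchi (MvPowerSeries.X 0 : MvPowerSeries (Fin 3) (Polynomial ℤ))
          (MvPowerSeries.X 1))
        (MvPowerSeries.X 2) =
      subst2 Fchi (MvPowerSeries.X 0 : MvPowerSeries (Fin 3) (Polynomial ℤ))
        (subst2 Fchi (MvPowerSeries.X 1) (MvPowerSeries.X 2)) := by
  refine ⟨⟨(isChiSum_subst2_Fchi (constantCoeff_X _) (map_zero _)).eq_of_right_eq_zero,
    (isChiSum_subst2_Fchi (map_zero _) (constantCoeff_X _)).eq_of_left_eq_zero⟩, ?_, ?_⟩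
  · exact (isChiSum_subst2_Fchi (constantCoeff_X _) (constantCoeff_X _)).comm.unique isChiSum_Fchi
      (isUnit_one_add_C_mul_mul _ _ (constantCoeff_X _))
  · have hX (i : Fin 3) : constantCoeff (X i : MvPowerSeries (Fin 3) (Polynomial ℤ)) = 0 :=
      constantCoeff_X i
    have hA0 := constantCoeff_subst2_Fchi (hX 0) (hX 1)
    have hB0 := constantCoeff_subst2_Fchi (hX 1) (hX 2)
    exact IsChiSum.assoc (isChiSum_subst2_Fchi (hX 0) (hX 1)) (isChiSum_subst2_Fchi (hX 1) (hX 2))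
      (isChiSum_subst2_Fchi hA0 (hX 2)) (isChiSum_subst2_Fchi (hX 0) hB0)
      (isUnit_one_add_C_mul_mul _ _ (hX 0)) (isUnit_one_add_C_mul_mul _ _ (hX 1))
      (isUnit_one_add_C_mul_mul _ _ hA0) (isUnit_one_add_C_mul_mul _ _ (hX 0))

end
end

section
/- Let K be a field and q, x, y, z ∈ K. Define f(a,b) = (a + b + (1+q)·a·b)/(1 + q·a·b) whenever 1 + q·a·b ≠ 0. Assume 1 + q·x·y ≠ 0, 1 + q·y·z ≠ 0, 1 + q·f(x,y)·z ≠ 0, and 1 + q·x·f(y,z) ≠ 0. Then f(f(x,y), z) = f(x, f(y,z)). -/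
/-! Composing the law twice and clearing the inner denominator `1 + qxy` gives
`f(f(x,y),z) = N(x,y,z) / D(x,y,z)` with `N` and `D` symmetric polynomials. Since `f` is
commutative, `f(x,f(y,z)) = f(f(y,z),x) = N(y,z,x) / D(y,z,x)`, which is the same fraction. -/

section GroupLaw

variable {K : Type*} [Field K]

def groupLaw (q a b : K) : K := (a + b + (1 + q) * a * b) / (1 + q * a * b)

theorem groupLaw_comm (q a b : K) : groupLaw q a b = groupLaw q b a := by
  unfold groupLaw
  ring

def tripleNum (q x y z : K) : K :=
  x + y + z + (1 + q) * (x * y + y * z + z * x) + (q + (1 + q) ^ 2) * x * y * z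

def tripleDen (q x y z : K) : K :=
  1 + q * (x * y + y * z + z * x) + q * (1 + q) * x * y * z

theorem tripleNum_rotate (q x y z : K) : tripleNum q y z x = tripleNum q x y z := by
  unfold tripleNum
  ring

theorem tripleDen_rotate (q x y z : K) : tripleDen q y z x = tripleDen q x y z := by
  unfold tripleDen
  ring

variable {q x y z : K}

theorem groupLaw_mul_den (h : 1 + q * x * y ≠ 0) :
    groupLaw q x y * (1 + q * x * y) = x + y + (1 + q) * x * y :=
  div_mul_cancel₀ _ h

theorem groupLaw_groupLaw (h₁ : 1 + q * x * y ≠ 0) (h₂ : 1 + q * groupLaw q x y * z ≠ 0) :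
    groupLaw q (groupLaw q x y) z = tripleNum q x y z / tripleDen q x y z := by
  have hw := groupLaw_mul_den h₁
  set w := groupLaw q x y
  have hden : tripleDen q x y z = (1 + q * x * y) * (1 + q * w * z) := by
    unfold tripleDen
    linear_combination (-q * z) * hw
  have hnum : (w + z + (1 + q) * w * z) * (1 + q * x * y) = tripleNum q x y z := by
    unfold tripleNum
    linear_combination (1 + (1 + q) * z) * hw
  rw [hden, groupLaw, div_eq_div_iff h₂ (mul_ne_zero h₁ h₂), ← hnum]
  ring

theorem groupLaw_assoc (h₁ : 1 + q * x * y ≠ 0) (h₂ : 1 + q * y * z ≠ 0)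
    (h₃ : 1 + q * groupLaw q x y * z ≠ 0) (h₄ : 1 + q * x * groupLaw q y z ≠ 0) :
    groupLaw q (groupLaw q x y) z = groupLaw q x (groupLaw q y z) := by
  rw [mul_right_comm] at h₄
  rw [groupLaw_comm q x (groupLaw q y z), groupLaw_groupLaw h₁ h₃, groupLaw_groupLaw h₂ h₄,
    tripleNum_rotate q x y z, tripleDen_rotate q x y z]

end GroupLaw

/-- The rational operation `f(a,b) = (a + b + (1+q)ab)/(1 + qab)` (the group
law `F_χ` evaluated at field elements) is associative wherever all the
denominators involved are nonzero. -/
theorem stmt5 {K : Type*} [Field K] (q x y z : K)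
    (f : K → K → K) (hf : ∀ a b, f a b = (a + b + (1 + q) * a * b) / (1 + q * a * b))
    (h1 : 1 + q * x * y ≠ 0) (h2 : 1 + q * y * z ≠ 0)
    (h3 : 1 + q * f x y * z ≠ 0) (h4 : 1 + q * x * f y z ≠ 0) :
    f (f x y) z = f x (f y z) := by
  obtain rfl : f = groupLaw q := funext₂ hf
  exact groupLaw_assoc h1 h2 h3 h4
end
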